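/- There is an absolute constant C such that the trace operator maps Ẇ^{1,2}(ℝ²₊) boundedly into BMO(∂ℝ²₊): for every φ ∈ Ẇ^{1,2}(ℝ²₊) (smooth up to the boundary with ‖∇φ‖_{L²(ℝ²₊)} < ∞), every R > 0 and every ball B_R centred on ∂ℝ²₊, one has ⨍_{B_R ∩ ∂ℝ²₊} |φ − ⨍_{B₂R ∩ ℝ²₊} φ| dσ ≤ C‖∇φ‖_{L²(ℝ²₊)}, where B_{2R} is the concentric ball of radius 2R. -/

import Mathlib

open MeasureTheory Filter Set Matrix
open scoped Topology

noncomputable section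

abbrev Pt : Type := ℝ × ℝ
abbrev Mat : Type := Matrix (Fin 2) (Fin 2) ℝ

/-- The gradient of a function on `ℝ²`, as a vector in `Fin 2 → ℝ`. -/
def grad (u : Pt → ℝ) (X : Pt) : Fin 2 → ℝ :=
  ![fderiv ℝ u X (1, 0), fderiv ℝ u X (0, 1)]

/-- Euclidean norm of a vector in `Fin 2 → ℝ`. -/
def vnorm (v : Fin 2 → ℝ) : ℝ := Real.sqrt (v 0 ^ 2 + v 1 ^ 2)

/-- `|∇u|` at a point. -/
def gradNorm (u : Pt → ℝ) (X : Pt) : ℝ := vnorm (grad u X)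

/-- squared Euclidean norm of a point of `ℝ²`. -/
def nsq (X : Pt) : ℝ := X.1 ^ 2 + X.2 ^ 2

/-- Euclidean distance on `ℝ²`. -/
def edist2 (X Y : Pt) : ℝ := Real.sqrt ((X.1 - Y.1) ^ 2 + (X.2 - Y.2) ^ 2)

/-- Euclidean ball in `ℝ²`. -/
def eball (X : Pt) (r : ℝ) : Set Pt := {Y | edist2 X Y < r}

/-- Uniform ellipticity with constants `lam`, `Lam` for a matrix of bounded
measurable coefficients on `ℝ²` (not necessarily symmetric). -/
def Elliptic (lam Lam : ℝ) (A : Pt → Mat) : Prop :=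
  0 < lam ∧ (∀ X i j, |A X i j| ≤ Lam) ∧ (∀ i j, Measurable fun X => A X i j) ∧
    ∀ (X : Pt) (ξ : Fin 2 → ℝ), lam * (ξ 0 ^ 2 + ξ 1 ^ 2) ≤ dotProduct ξ ((A X).mulVec ξ)

/-- Ellipticity for `t`-independent coefficients `A = A(x)`. -/
def EllipticX (lam Lam : ℝ) (A : ℝ → Mat) : Prop := Elliptic lam Lam fun X => A X.1

/-- `A` has the upper triangular form `[[1, c],[0, d]]`. -/
def UpperTri (A : ℝ → Mat) : Prop := ∀ x : ℝ, A x 0 0 = 1 ∧ A x 1 0 = 0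

/-- `φ` is Lipschitz with constant `k`. -/
def LipCond (k : ℝ) (φ : ℝ → ℝ) : Prop := ∀ x y : ℝ, |φ x - φ y| ≤ k * |x - y|

/-- `φ ∈ Λ^k(ε₀)` with slope `α₀`: `|α₀| ≤ k` and `‖φ' - α₀‖_∞ ≤ ε₀`. -/
def MemLam (k ε₀ α₀ : ℝ) (φ : ℝ → ℝ) : Prop :=
  |α₀| ≤ k ∧ Differentiable ℝ φ ∧ ∀ x : ℝ, |deriv φ x - α₀| ≤ ε₀

/-- The domain above the graph of `φ`. -/
def Omega (φ : ℝ → ℝ) : Set Pt := {X | φ X.1 < X.2}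

/-- The graph of `φ`, i.e. `∂Ω`. -/
def Bdry (φ : ℝ → ℝ) : Set Pt := {X | φ X.1 = X.2}

/-- distance to the boundary `δ(X) = dist(X, ∂Ω)`. -/
def bdist (φ : ℝ → ℝ) (X : Pt) : ℝ := sInf (edist2 X '' Bdry φ)

/-- arc-length weight `(1 + φ'(x)²)^{1/2}`. -/
def wgt (φ : ℝ → ℝ) (x : ℝ) : ℝ := Real.sqrt (1 + deriv φ x ^ 2)

/-- `L^p(∂Ω)` norm of a boundary function, written in the graph coordinate. -/
def bLp (φ : ℝ → ℝ) (p : ℝ) (f : ℝ → ℝ) : ℝ := (∫ x : ℝ, |f x| ^ p * wgt φ x) ^ (1 / p)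

/-- membership in `L^p(∂Ω)`. -/
def MemBLp (φ : ℝ → ℝ) (p : ℝ) (f : ℝ → ℝ) : Prop :=
  AEStronglyMeasurable f volume ∧ Integrable fun x => |f x| ^ p * wgt φ x

/-- tangential derivative `∂_τ f` along `∂Ω`, in the graph coordinate. -/
def tder (φ : ℝ → ℝ) (f : ℝ → ℝ) (x : ℝ) : ℝ := deriv f x / wgt φ x

/-- membership in the boundary Sobolev space `W^{1,p}(∂Ω)`. -/
def MemBW1p (φ : ℝ → ℝ) (p : ℝ) (f : ℝ → ℝ) : Prop := MemBLp φ p f ∧ MemBLp φ p (tder φ f)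

/-- the `W^{1,2}(∂Ω)` norm. -/
def bW12norm (φ : ℝ → ℝ) (f : ℝ → ℝ) : ℝ :=
  Real.sqrt ((∫ x : ℝ, f x ^ 2 * wgt φ x) + ∫ x : ℝ, tder φ f x ^ 2 * wgt φ x)

/-- the square of the `W̃^{1,2}(Ω)` norm. -/
def tw2 (φ : ℝ → ℝ) (u : Pt → ℝ) : ℝ :=
  (∫ X in Omega φ, u X ^ 2 / (1 + nsq X)) + ∫ X in Omega φ, gradNorm u X ^ 2

/-- the `W̃^{1,2}(Ω)` norm. -/
def twNorm (φ : ℝ → ℝ) (u : Pt → ℝ) : ℝ := Real.sqrt (tw2 φ u)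

/-- membership in `W̃^{1,2}(Ω)`. -/
def MemTW (φ : ℝ → ℝ) (u : Pt → ℝ) : Prop :=
  IntegrableOn (fun X => u X ^ 2 / (1 + nsq X)) (Omega φ) volume ∧
    IntegrableOn (fun X => gradNorm u X ^ 2) (Omega φ) volume

/-- `u` has boundary trace `f` on `∂Ω`: the vertical translates of `u` converge to `f`
in `L²(∂Ω)` as `h ↓ 0`. -/
def HasBTrace (φ : ℝ → ℝ) (u : Pt → ℝ) (f : ℝ → ℝ) : Prop :=
  Tendsto (fun h : ℝ => ∫ x : ℝ, (u (x, φ x + h) - f x) ^ 2 * wgt φ x)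
    (𝓝[>] (0 : ℝ)) (𝓝 0)

/-- the bilinear energy form `∬_Ω A∇u·∇v`. -/
def aForm (A : Pt → Mat) (φ : ℝ → ℝ) (u v : Pt → ℝ) : ℝ :=
  ∫ X in Omega φ, dotProduct ((A X).mulVec (grad u X)) (grad v X)

/-- `u` is the (weak, variational) solution of the Dirichlet problem with data `f₀`. -/
def DirichletSol (A : Pt → Mat) (φ : ℝ → ℝ) (f₀ : ℝ → ℝ) (u : Pt → ℝ) : Prop :=
  MemTW φ u ∧ HasBTrace φ u f₀ ∧
    ∀ ψ : Pt → ℝ, MemTW φ ψ → HasBTrace φ ψ (fun _ => 0) → aForm A φ u ψ = 0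

/-- membership in the homogeneous Sobolev space `Ẇ^{1,2}(Ω)`. -/
def MemHomW (φ : ℝ → ℝ) (u : Pt → ℝ) : Prop :=
  IntegrableOn (fun X => gradNorm u X ^ 2) (Omega φ) volume

/-- `u` is a (weak, variational) solution of the Neumann problem with data `g₀`. -/
def NeumannSol (A : Pt → Mat) (φ : ℝ → ℝ) (g₀ : ℝ → ℝ) (u : Pt → ℝ) : Prop :=
  MemHomW φ u ∧
    ∀ ψ : Pt → ℝ, ContinuousOn ψ (closure (Omega φ)) → MemHomW φ ψ →
      aForm A φ u ψ = ∫ x : ℝ, g₀ x * ψ (x, φ x) * wgt φ x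

/-- the Poisson kernel of the upper half plane. -/
def poissonKer (t y : ℝ) : ℝ := t / (Real.pi * (y ^ 2 + t ^ 2))

/-- harmonic (Poisson) extension of `f` to the upper half plane. -/
def poissonExt (f : ℝ → ℝ) (x t : ℝ) : ℝ := ∫ y : ℝ, f (x - y) * poissonKer t y

/-- the Poisson maximal function. -/
def poissonMax (f : ℝ → ℝ) (x : ℝ) : ℝ := ⨆ t : Set.Ioi (0 : ℝ), |poissonExt f x ↑t|

/-- membership in the classical real Hardy space `H¹(ℝ)`. -/
def MemH1R (f : ℝ → ℝ) : Prop := Integrable f ∧ Integrable (poissonMax f)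

/-- the `H¹(ℝ)` norm. -/
def H1Rnorm (f : ℝ → ℝ) : ℝ := ∫ x : ℝ, poissonMax f x

/-- membership in `H¹(∂Ω)`: the weighted pullback lies in `H¹(ℝ)`. -/
def MemH1B (φ : ℝ → ℝ) (g : ℝ → ℝ) : Prop := MemH1R fun x => g x * wgt φ x

/-- the `H¹(∂Ω)` norm. -/
def H1Bnorm (φ : ℝ → ℝ) (g : ℝ → ℝ) : ℝ := H1Rnorm fun x => g x * wgt φ x

/-- the nontangential approach region `Γ(Q)` with aperture parameter `a`. -/
def ntCone (a : ℝ) (φ : ℝ → ℝ) (Q : Pt) : Set Pt :=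
  {X ∈ Omega φ | edist2 X Q ≤ (1 + a) * bdist φ X}

/-- the nontangential maximal function `N(u)`. -/
def ntMax (a : ℝ) (φ : ℝ → ℝ) (u : Pt → ℝ) (Q : Pt) : ℝ :=
  ⨆ X : ntCone a φ Q, |u (X : Pt)|

/-- the modified nontangential maximal function `Ñ(F)` (with `L²` averages). -/
def ntMaxT (a : ℝ) (φ : ℝ → ℝ) (F : Pt → ℝ) (Q : Pt) : ℝ :=
  ⨆ X : ntCone a φ Q,
    Real.sqrt (⨍ Y in eball (X : Pt) (bdist φ (X : Pt) / 2), F Y ^ 2)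

/-- the square function `S(u)`. -/
def sqFun (a : ℝ) (φ : ℝ → ℝ) (u : Pt → ℝ) (Q : Pt) : ℝ :=
  Real.sqrt (∫ X in ntCone a φ Q, gradNorm u X ^ 2)

/-- `u(X) = O(|X|^{δ+m})` for every `δ > 0`, as `|X| → ∞` in `Ω`. -/
def DecayLike (φ : ℝ → ℝ) (u : Pt → ℝ) (m : ℝ) : Prop :=
  ∀ δ : ℝ, 0 < δ → ∃ C R : ℝ, ∀ X ∈ Omega φ, R ≤ Real.sqrt (nsq X) →
    |u X| ≤ C * Real.sqrt (nsq X) ^ (δ + m)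

/-- `G` is the (Kenig–Ni) fundamental solution of `L = div A∇` with pole at `Z`. -/
def IsFundSol (A : Pt → Mat) (Z : Pt) (G : Pt → ℝ) : Prop :=
  (∀ Y : Pt, Y ≠ Z → DifferentiableAt ℝ G Y) ∧
  (∀ K : Set Pt, IsCompact K → Z ∉ K →
      IntegrableOn (fun Y => G Y ^ 2) K volume ∧
      IntegrableOn (fun Y => gradNorm G Y ^ 2) K volume) ∧
  (∀ p : ℝ, 1 ≤ p → p < 2 → ∀ K : Set Pt, IsCompact K →
      IntegrableOn (fun Y => |G Y| ^ p) K volume ∧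
      IntegrableOn (fun Y => gradNorm G Y ^ p) K volume) ∧
  (∀ ψ : Pt → ℝ, ContDiff ℝ (⊤ : ℕ∞) ψ → HasCompactSupport ψ →
      ∫ Y : Pt, dotProduct (((A Y)ᵀ).mulVec (grad G Y)) (grad ψ Y) = -ψ Z) ∧
  (∃ C R : ℝ, 1 < R ∧ ∀ Y : Pt, R ≤ edist2 Z Y → |G Y| ≤ C * Real.log (edist2 Z Y))

/-- a family of fundamental solutions of `L = div A∇` (for `t`-independent `A`),
one for each pole. -/
def FundFamily (A : ℝ → Mat) (Γ : Pt → Pt → ℝ) : Prop :=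
  ∀ Z : Pt, IsFundSol (fun X => A X.1) Z (Γ Z)

/-- a family of fundamental solutions of the adjoint operator `L^t = div A^t∇`. -/
def FundFamilyT (A : ℝ → Mat) (Γ : Pt → Pt → ℝ) : Prop :=
  ∀ Z : Pt, IsFundSol (fun X => (A X.1)ᵀ) Z (Γ Z)

/-- `u` is a weak solution of `div A∇u = 0` in `Ω` (with `W^{1,2}_loc` regularity). -/
def WeakSolX (A : ℝ → Mat) (φ : ℝ → ℝ) (u : Pt → ℝ) : Prop :=
  (∀ K : Set Pt, IsCompact K → K ⊆ Omega φ →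
      IntegrableOn (fun X => u X ^ 2) K volume ∧
      IntegrableOn (fun X => gradNorm u X ^ 2) K volume) ∧
  ∀ ψ : Pt → ℝ, ContDiff ℝ (⊤ : ℕ∞) ψ → HasCompactSupport ψ → tsupport ψ ⊆ Omega φ →
    ∫ X in Omega φ, dotProduct ((A X.1).mulVec (grad u X)) (grad ψ X) = 0

/-- `wt` is a conjugate of the solution `w`: `[[0,1],[−1,0]]∇wt = A∇w` in `Ω`. -/
def IsConjPair (A : ℝ → Mat) (φ : ℝ → ℝ) (w wt : Pt → ℝ) : Prop :=
  ∀ X ∈ Omega φ,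
    grad wt X 1 = ((A X.1).mulVec (grad w X)) 0 ∧
    grad wt X 0 = -((A X.1).mulVec (grad w X)) 1

/-- the kernel `ν(Y)·A^t(Y)∇Γ_{(x,φ(x)+h)}(Y)` of the double layer potential, including
the arc-length weight. -/
def KcoDir (A : ℝ → Mat) (φ : ℝ → ℝ) (Γ : Pt → Pt → ℝ) (h x y : ℝ) : ℝ :=
  dotProduct ![deriv φ y, -1]
    (((A y)ᵀ).mulVec (grad (Γ (x, φ x + h)) (y, φ y)))

/-- the kernel `τ(Y)·∇Γ_{(x,φ(x)+h)}(Y)`, including the arc-length weight. -/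
def Ltan (φ : ℝ → ℝ) (Γ : Pt → Pt → ℝ) (h x y : ℝ) : ℝ :=
  dotProduct ![1, deriv φ y] (grad (Γ (x, φ x + h)) (y, φ y))

/-- the vector `∇Γ_{(x,φ(x)+h)}(y,φ(y))`. -/
def kvec (φ : ℝ → ℝ) (Γ : Pt → Pt → ℝ) (h x y : ℝ) : Fin 2 → ℝ :=
  grad (Γ (x, φ x + h)) (y, φ y)

/-- sup of the absolute values of the entries of a vector (the matrix norm `|·|`
used for Calderón–Zygmund kernels whose two rows are equal). -/
def kabs (v : Fin 2 → ℝ) : ℝ := max |v 0| |v 1|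

/-- the matrix kernel `K_h(x,y)`, both rows equal to `∇Γ_{(x,φ(x)+h)}(y,φ(y))`. -/
def Kh (φ : ℝ → ℝ) (Γ : Pt → Pt → ℝ) (h x y : ℝ) : Mat :=
  Matrix.of fun _ j => kvec φ Γ h x y j

/-- the matrix kernel `K̃_h(x,y)`, both rows equal to `∇_X Γ̃^t_{(x,φ(x)+h)}(y,φ(y))`
(gradient in the pole variable of the conjugate fundamental solution `Gc`). -/
def KhT (φ : ℝ → ℝ) (Gc : Pt → Pt → ℝ) (h x y : ℝ) : Mat :=
  Matrix.of fun _ j => grad (fun W => Gc W (y, φ y)) (x, φ x + h) j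

/-- `B₁`: first column `(1+(φ')²)^{1/2} A ν`, second column `(1+(φ')²)^{1/2} τ`. -/
def B1mat (A : ℝ → Mat) (φ : ℝ → ℝ) (x : ℝ) : Mat :=
  Matrix.of fun i j =>
    if j = 0 then ((A x).mulVec ![deriv φ x, -1]) i
    else (![1, deriv φ x] : Fin 2 → ℝ) i

/-- `B₂`: the diagonal matrix with entries `(1+(φ')²)^{1/2} ν·A^tκ^⊥`, `κ^⊥ = (−α₀,1)`. -/
def B2mat (A : ℝ → Mat) (φ : ℝ → ℝ) (α₀ x : ℝ) : Mat :=
  dotProduct ![deriv φ x, -1] (((A x)ᵀ).mulVec ![-α₀, 1]) • (1 : Mat)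

/-- `B₃`: the diagonal matrix with entries `(1+(φ')²)^{1/2} τ·κ`, `κ = (1,α₀)`. -/
def B3mat (φ : ℝ → ℝ) (α₀ x : ℝ) : Mat :=
  dotProduct ![1, deriv φ x] ![1, α₀] • (1 : Mat)

/-- the a priori assumptions on `A`: smooth and equal to the identity for large `x`. -/
def AprioriA (A : ℝ → Mat) : Prop :=
  (∀ i j, ContDiff ℝ (⊤ : ℕ∞) fun x => A x i j) ∧ ∃ R : ℝ, ∀ x : ℝ, R ≤ |x| → A x = 1

/-- the a priori assumptions on `φ`: smooth, `φ' ≡ α₀` outside a compact set and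
`x ↦ φ(x) − α₀x ∈ C_c^∞(ℝ)`. -/
def Aprioriφ (φ : ℝ → ℝ) (α₀ : ℝ) : Prop :=
  ContDiff ℝ (⊤ : ℕ∞) φ ∧ HasCompactSupport (fun x => φ x - α₀ * x) ∧
    ∃ R : ℝ, ∀ x : ℝ, R ≤ |x| → deriv φ x = α₀

/-- a normalised bump: smooth, supported in a ball of radius `10`, with the first
three derivatives of each entry bounded by one. -/
def IsBump (F : ℝ → Mat) : Prop :=
  (∀ i j, ContDiff ℝ (⊤ : ℕ∞) fun x => F x i j) ∧
  (∃ x₀ : ℝ, ∀ x : ℝ, 10 < |x - x₀| → F x = 0) ∧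
  ∀ β : ℕ, β ≤ 2 → ∀ (x : ℝ) (i j : Fin 2), |iteratedDeriv β (fun t => F t i j) x| ≤ 1

/-- the rescaled bump `F_R = R⁻¹ F(·/R)`. -/
def bumpScale (R : ℝ) (F : ℝ → Mat) : ℝ → Mat := fun x => R⁻¹ • F (x / R)

/-- Schwartz-type seminorms for matrix-valued functions on `ℝ`. -/
def msemi (N β : ℕ) (F : ℝ → Mat) : ℝ :=
  ⨆ x : ℝ, ⨆ i : Fin 2, ⨆ j : Fin 2,
    (1 + |x|) ^ N * |iteratedDeriv β (fun t => F t i j) x|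

/-- membership in the Schwartz class `𝒮(ℝ, M)`. -/
def IsMSchwartz (F : ℝ → Mat) : Prop :=
  (∀ i j, ContDiff ℝ (⊤ : ℕ∞) fun x => F x i j) ∧
  ∀ N β : ℕ, ∃ C : ℝ, ∀ (x : ℝ) (i j : Fin 2),
    (1 + |x|) ^ N * |iteratedDeriv β (fun t => F t i j) x| ≤ C

/-- `Gc X` is a conjugate of `Gt X` (the fundamental solution of `L^t` with pole `X`),
defined off the vertical ray above `X`: `A∇Γ^t_X = [[0,1],[−1,0]]∇Γ̃^t_X` there. -/
def ConjFam (A : ℝ → Mat) (Gt Gc : Pt → Pt → ℝ) : Prop :=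
  ∀ X Y : Pt, ¬(Y.1 = X.1 ∧ X.2 ≤ Y.2) →
    DifferentiableAt ℝ (Gc X) Y ∧ DifferentiableAt ℝ (fun W => Gc W Y) X ∧
    grad (Gc X) Y 1 = ((A Y.1).mulVec (grad (Gt X) Y)) 0 ∧
    grad (Gc X) Y 0 = -((A Y.1).mulVec (grad (Gt X) Y)) 1

/-- the BMO norm of a matrix-valued function on `ℝ` (sup over the entries). -/
def bmoNormM (U : ℝ → Mat) : ℝ :=
  ⨆ i : Fin 2, ⨆ j : Fin 2, ⨆ a : ℝ, ⨆ b : ℝ, ⨆ _ : a < b,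
    ⨍ x in Set.Ioo a b, |U x i j - ⨍ y in Set.Ioo a b, U y i j|

/-- a smooth matrix-valued `H¹` atom adapted to the interval `[c−r, c+r]`. -/
def IsAtomM (a : ℝ → Mat) (c r : ℝ) : Prop :=
  (∀ i j, ContDiff ℝ (⊤ : ℕ∞) fun x => a x i j) ∧
  (∀ x : ℝ, x ∉ Metric.closedBall c r → a x = 0) ∧
  (∀ i j, (∫ x : ℝ, a x i j) = 0) ∧
  ∀ i j, (∫ x : ℝ, a x i j ^ 2) ≤ (2 * r)⁻¹

/-- `U` represents the BMO function `T(B₀)` where `T` has kernels `KK h`: for every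
smooth atom `a` and cutoff `η` adapted to its supporting interval,
`⟨a, U⟩ = lim_{h↓0}⟨a, T_h(ηB₀)⟩ + ∬ aᵗK(1−η)B₀`. -/
def RepBMO (KK : ℝ → ℝ → ℝ → Mat) (B₀ : ℝ → Mat) (U : ℝ → Mat) : Prop :=
  ∀ (a : ℝ → Mat) (c r : ℝ), 0 < r → IsAtomM a c r →
    ∀ η : ℝ → ℝ, ContDiff ℝ (⊤ : ℕ∞) η → HasCompactSupport η →
      (∀ x ∈ Metric.closedBall c (2 * r), η x = 1) →
      Tendsto
        (fun h : ℝ => ∫ x : ℝ, ∫ y : ℝ,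
          Matrix.trace ((a x)ᵀ * KK h x y * (η y • B₀ y)))
        (𝓝[>] (0 : ℝ))
        (𝓝 ((∫ x : ℝ, Matrix.trace ((a x)ᵀ * U x)) -
          ∫ y : ℝ, ∫ x : ℝ,
            Matrix.trace ((a x)ᵀ * KK 0 x y * ((1 - η y) • B₀ y))))

/-- `L^p(ℝ, M)` norm of a matrix-valued function. -/
def mLp (p : ℝ) (F : ℝ → Mat) : ℝ :=
  (∫ x : ℝ, (⨆ i : Fin 2, ⨆ j : Fin 2, |F x i j|) ^ p) ^ (1 / p)

/-- `L^p(ℝ)` norm. -/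
def lpR (p : ℝ) (f : ℝ → ℝ) : ℝ := (∫ x : ℝ, |f x| ^ p) ^ (1 / p)

/-- the Dirichlet problem `(D)_p` holds for `div A∇` in `Ω` with constant `C`. -/
def DirichletHolds (A : ℝ → Mat) (φ : ℝ → ℝ) (a p C : ℝ) : Prop :=
  ∀ f₀ : ℝ → ℝ, MemBLp φ p f₀ → MemBW1p φ 2 f₀ → MemBLp φ (7/6) f₀ →
    MemBLp φ (17/6) f₀ →
    ∀ u : Pt → ℝ, DirichletSol (fun X => A X.1) φ f₀ u →
      bLp φ p (fun x => ntMax a φ u (x, φ x)) ≤ C * bLp φ p f₀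

/-- the open upper half plane `ℝ²₊`. -/
def HalfPlane : Set Pt := {X | 0 < X.2}

end

section TraceHelpers

open scoped ENNReal

lemma isOpen_halfPlane : IsOpen HalfPlane :=
  isOpen_lt continuous_const continuous_snd

lemma halfPlane_eq : HalfPlane = (univ : Set ℝ) ×ˢ Ioi (0:ℝ) := by
  ext X; simp [HalfPlane, Set.mem_prod, Set.mem_Ioi]

lemma closure_halfPlane : closure HalfPlane = (univ : Set ℝ) ×ˢ Ici (0:ℝ) := by
  rw [halfPlane_eq, closure_prod_eq, closure_univ, closure_Ioi]

lemma mem_closure_halfPlane {X : Pt} (h : 0 ≤ X.2) : X ∈ closure HalfPlane := by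
  rw [closure_halfPlane]; exact ⟨trivial, h⟩

lemma gradNorm_nonneg (u : Pt → ℝ) (X : Pt) : 0 ≤ gradNorm u X := Real.sqrt_nonneg _

lemma abs_grad_le (u : Pt → ℝ) (X : Pt) (i : Fin 2) : |grad u X i| ≤ gradNorm u X := by
  have h : |grad u X i| = Real.sqrt ((grad u X i) ^ 2) := (Real.sqrt_sq_eq_abs _).symm
  rw [h, gradNorm, vnorm]
  apply Real.sqrt_le_sqrt
  have h0 := sq_nonneg (grad u X 0)
  have h1 := sq_nonneg (grad u X 1)
  fin_cases i
  · show grad u X 0 ^ 2 ≤ _; linarith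
  · show grad u X 1 ^ 2 ≤ _; linarith

lemma measurable_grad (u : Pt → ℝ) (i : Fin 2) : Measurable fun X => grad u X i := by
  fin_cases i
  · show Measurable fun X => grad u X 0
    simp only [grad, Matrix.cons_val_zero]
    exact measurable_fderiv_apply_const (𝕜 := ℝ) (f := u) _
  · show Measurable fun X => grad u X 1
    simp only [grad, Matrix.cons_val_one, Matrix.head_cons]
    exact measurable_fderiv_apply_const (𝕜 := ℝ) (f := u) _

variable {ψ : Pt → ℝ}

lemma contDiffAt_of_mem (hψ : ContDiffOn ℝ (⊤:ℕ∞) ψ (closure HalfPlane)) {X : Pt}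
    (hX : 0 < X.2) : ContDiffAt ℝ (⊤:ℕ∞) ψ X :=
  hψ.contDiffAt (mem_nhds_iff.mpr ⟨HalfPlane, subset_closure, isOpen_halfPlane, hX⟩)

lemma continuousOn_grad (hψ : ContDiffOn ℝ (⊤:ℕ∞) ψ (closure HalfPlane)) (i : Fin 2) :
    ContinuousOn (fun X => grad ψ X i) HalfPlane := by
  have h1 : ContinuousOn (fderiv ℝ ψ) HalfPlane :=
    (hψ.mono subset_closure).continuousOn_fderiv_of_isOpen isOpen_halfPlane (by exact_mod_cast le_top)
  fin_cases i
  · show ContinuousOn (fun X => grad ψ X 0) HalfPlane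
    simp only [grad, Matrix.cons_val_zero]
    exact (ContinuousLinearMap.apply ℝ ℝ ((1:ℝ),(0:ℝ))).continuous.comp_continuousOn h1
  · show ContinuousOn (fun X => grad ψ X 1) HalfPlane
    simp only [grad, Matrix.cons_val_one, Matrix.head_cons]
    exact (ContinuousLinearMap.apply ℝ ℝ ((0:ℝ),(1:ℝ))).continuous.comp_continuousOn h1

lemma hasDerivAt_vert (hψ : ContDiffOn ℝ (⊤:ℕ∞) ψ (closure HalfPlane)) (x : ℝ) {t : ℝ}
    (ht : 0 < t) : HasDerivAt (fun s => ψ (x, s)) (grad ψ (x, t) 1) t := by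
  have hd : DifferentiableAt ℝ ψ (x, t) :=
    (contDiffAt_of_mem hψ (show (0:ℝ) < ((x,t) : Pt).2 from ht)).differentiableAt (by simp)
  have hc : HasDerivAt (fun s : ℝ => ((x, s) : Pt)) (((0:ℝ), (1:ℝ)) : Pt) t :=
    (hasDerivAt_const t x).prodMk (hasDerivAt_id t)
  have h := hd.hasFDerivAt.comp_hasDerivAt t hc
  simpa [grad, Function.comp_def] using h

lemma hasDerivAt_horiz (hψ : ContDiffOn ℝ (⊤:ℕ∞) ψ (closure HalfPlane)) {t : ℝ}
    (ht : 0 < t) (x : ℝ) : HasDerivAt (fun s => ψ (s, t)) (grad ψ (x, t) 0) x := by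
  have hd : DifferentiableAt ℝ ψ (x, t) :=
    (contDiffAt_of_mem hψ (show (0:ℝ) < ((x,t) : Pt).2 from ht)).differentiableAt (by simp)
  have hc : HasDerivAt (fun s : ℝ => ((s, t) : Pt)) (((1:ℝ), (0:ℝ)) : Pt) x :=
    (hasDerivAt_id x).prodMk (hasDerivAt_const x t)
  have h := hd.hasFDerivAt.comp_hasDerivAt x hc
  simpa [grad, Function.comp_def] using h

end TraceHelpers
section FTCHelpers
open scoped ENNReal

lemma ftc_abs_lintegral {g g' : ℝ → ℝ} {lo hi a b : ℝ} (hab : a ≤ b)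
    (hsub : Set.Icc a b ⊆ Set.Ioo lo hi)
    (hd : ∀ u ∈ Set.Icc a b, HasDerivAt g (g' u) u)
    (hcont : ContinuousOn g' (Set.Icc a b)) :
    ENNReal.ofReal |g b - g a| ≤ ∫⁻ u in Set.Ioo lo hi, ENNReal.ofReal |g' u| := by
  have hii : IntervalIntegrable g' volume a b := by
    apply ContinuousOn.intervalIntegrable
    rwa [Set.uIcc_of_le hab]
  have heq : ∫ u in a..b, g' u = g b - g a := by
    apply intervalIntegral.integral_eq_sub_of_hasDerivAt _ hii
    rwa [Set.uIcc_of_le hab]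
  have hint : IntegrableOn (fun u => |g' u|) (Set.Ioc a b) volume :=
    ((intervalIntegrable_iff_integrableOn_Ioc_of_le hab).mp hii).abs
  calc ENNReal.ofReal |g b - g a| = ENNReal.ofReal |∫ u in a..b, g' u| := by rw [heq]
    _ ≤ ENNReal.ofReal (∫ u in a..b, |g' u|) :=
        ENNReal.ofReal_le_ofReal (intervalIntegral.abs_integral_le_integral_abs hab)
    _ = ENNReal.ofReal (∫ u in Set.Ioc a b, |g' u|) := by
        rw [intervalIntegral.integral_of_le hab]
    _ = ∫⁻ u in Set.Ioc a b, ENNReal.ofReal |g' u| :=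
        ofReal_integral_eq_lintegral_ofReal hint
          (Filter.Eventually.of_forall fun u => abs_nonneg _)
    _ ≤ ∫⁻ u in Set.Ioo lo hi, ENNReal.ofReal |g' u| :=
        lintegral_mono_set ((Set.Ioc_subset_Icc_self.trans hsub))

variable {ψ : Pt → ℝ}

/-- horizontal estimate -/
lemma horiz_bound (hψ : ContDiffOn ℝ (⊤:ℕ∞) ψ (closure HalfPlane)) {t y z lo hi : ℝ}
    (ht : 0 < t) (hy : y ∈ Set.Ioo lo hi) (hz : z ∈ Set.Ioo lo hi) :
    ENNReal.ofReal |ψ (y, t) - ψ (z, t)| ≤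
      ∫⁻ u in Set.Ioo lo hi, ENNReal.ofReal |grad ψ (u, t) 0| := by
  have key : ∀ a b : ℝ, a ∈ Set.Ioo lo hi → b ∈ Set.Ioo lo hi → a ≤ b →
      ENNReal.ofReal |ψ (b, t) - ψ (a, t)| ≤
        ∫⁻ u in Set.Ioo lo hi, ENNReal.ofReal |grad ψ (u, t) 0| := by
    intro a b hai hbi hab
    apply ftc_abs_lintegral (g := fun s => ψ (s, t)) hab
    · exact fun u hu => ⟨lt_of_lt_of_le hai.1 hu.1, lt_of_le_of_lt hu.2 hbi.2⟩
    · exact fun u hu => hasDerivAt_horiz hψ ht u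
    · apply (continuousOn_grad hψ 0).comp
        (Continuous.continuousOn (continuous_id.prodMk continuous_const))
      intro u _; exact ht
  rcases le_total z y with h | h
  · exact key z y hz hy h
  · rw [abs_sub_comm]; exact key y z hy hz h

/-- vertical estimate, interior -/
lemma vert_bound (hψ : ContDiffOn ℝ (⊤:ℕ∞) ψ (closure HalfPlane)) {x a b c : ℝ}
    (ha : 0 < a) (hab : a ≤ b) (hbc : b < c) :
    ENNReal.ofReal |ψ (x, b) - ψ (x, a)| ≤
      ∫⁻ u in Set.Ioo 0 c, ENNReal.ofReal |grad ψ (x, u) 1| := by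
  apply ftc_abs_lintegral (g := fun s => ψ (x, s)) hab
  · exact fun u hu => ⟨lt_of_lt_of_le ha hu.1, lt_of_le_of_lt hu.2 hbc⟩
  · exact fun u hu => hasDerivAt_vert hψ x (lt_of_lt_of_le ha hu.1)
  · apply (continuousOn_grad hψ 1).comp
      (Continuous.continuousOn (continuous_const.prodMk continuous_id))
    intro u hu; exact lt_of_lt_of_le ha hu.1

/-- vertical estimate, up to the boundary -/
lemma vert_bound_bdry (hψ : ContDiffOn ℝ (⊤:ℕ∞) ψ (closure HalfPlane)) {x b c : ℝ}
    (hb : 0 < b) (hbc : b < c) :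
    ENNReal.ofReal |ψ (x, 0) - ψ (x, b)| ≤
      ∫⁻ u in Set.Ioo 0 c, ENNReal.ofReal |grad ψ (x, u) 1| := by
  have hcw : ContinuousWithinAt ψ (closure HalfPlane) (x, 0) :=
    hψ.continuousOn _ (mem_closure_halfPlane le_rfl)
  have hmap : Tendsto (fun ε : ℝ => ((x, ε) : Pt)) (𝓝[>] (0:ℝ)) (𝓝[closure HalfPlane] ((x,0) : Pt)) := by
    rw [tendsto_nhdsWithin_iff]
    constructor
    · exact ((continuous_const.prodMk continuous_id).tendsto 0).mono_left nhdsWithin_le_nhds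
    · exact eventually_nhdsWithin_of_forall fun ε hε => subset_closure hε
  have h1 : Tendsto (fun ε : ℝ => ψ (x, ε)) (𝓝[>] (0:ℝ)) (𝓝 (ψ (x, 0))) :=
    hcw.tendsto.comp hmap
  have h2 : Tendsto (fun ε : ℝ => ENNReal.ofReal |ψ (x, b) - ψ (x, ε)|) (𝓝[>] (0:ℝ))
      (𝓝 (ENNReal.ofReal |ψ (x, b) - ψ (x, 0)|)) := by
    apply (ENNReal.continuous_ofReal.tendsto _).comp
    apply (continuous_abs.tendsto _).comp
    exact tendsto_const_nhds.sub h1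
  rw [abs_sub_comm]
  refine le_of_tendsto h2 ?_
  filter_upwards [Ioo_mem_nhdsGT_of_mem (Set.left_mem_Ico.mpr hb)] with ε hε
  exact vert_bound hψ hε.1 (le_of_lt hε.2) hbc

end FTCHelpers
section CSHelpers
open scoped ENNReal

lemma enorm_sq_eq {a : ℝ} : ENNReal.ofReal |a| ^ (2:ℝ) = ENNReal.ofReal (a ^ 2) := by
  have h1 : ENNReal.ofReal (a ^ 2) = ENNReal.ofReal |a| ^ (2:ℕ) := by
    rw [← sq_abs]; exact ENNReal.ofReal_pow (abs_nonneg a) 2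
  rw [h1, ← ENNReal.rpow_natCast]; norm_num

lemma cauchy_schwarz_lintegral {f : Pt → ℝ} (hf : Measurable f) {S : Set Pt}
    (hS : MeasurableSet S) :
    ∫⁻ X in S, ENNReal.ofReal |f X| ≤
      volume S ^ (1/2:ℝ) * (∫⁻ X in S, ENNReal.ofReal (f X ^ 2)) ^ (1/2:ℝ) := by
  have hpq : Real.HolderConjugate 2 2 := Real.HolderConjugate.two_two
  have h := ENNReal.lintegral_mul_le_Lp_mul_Lq (volume.restrict S) hpq
    (f := fun X => ENNReal.ofReal |f X|) (g := fun _ => 1)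
    ((ENNReal.measurable_ofReal.comp hf.abs).aemeasurable) aemeasurable_const
  simp only [Pi.mul_apply, mul_one, ENNReal.one_rpow, one_mul] at h
  calc ∫⁻ X in S, ENNReal.ofReal |f X|
      ≤ (∫⁻ X in S, ENNReal.ofReal |f X| ^ (2:ℝ)) ^ (1/2:ℝ) *
        (∫⁻ _ in S, (1:ℝ≥0∞)) ^ (1/2:ℝ) := h
    _ = (∫⁻ X in S, ENNReal.ofReal (f X ^ 2)) ^ (1/2:ℝ) * volume S ^ (1/2:ℝ) := by
        rw [setLIntegral_one]
        congr 1
        refine congrArg (· ^ (1/2:ℝ)) (lintegral_congr fun X => enorm_sq_eq)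
    _ = volume S ^ (1/2:ℝ) * (∫⁻ X in S, ENNReal.ofReal (f X ^ 2)) ^ (1/2:ℝ) := mul_comm _ _

end CSHelpers
section MainHelpers
open scoped ENNReal

lemma edist2_fst_le (X Y : Pt) : |X.1 - Y.1| ≤ edist2 X Y := by
  rw [edist2, ← Real.sqrt_sq_eq_abs]
  exact Real.sqrt_le_sqrt (by nlinarith [sq_nonneg (X.2 - Y.2)])

lemma edist2_snd_le (X Y : Pt) : |X.2 - Y.2| ≤ edist2 X Y := by
  rw [edist2, ← Real.sqrt_sq_eq_abs]
  exact Real.sqrt_le_sqrt (by nlinarith [sq_nonneg (X.1 - Y.1)])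

lemma lintegral_prod_set {J T : Set ℝ} {F : Pt → ℝ≥0∞} (hF : Measurable F) :
    ∫⁻ X in J ×ˢ T, F X = ∫⁻ x in J, ∫⁻ y in T, F (x, y) := by
  rw [Measure.volume_eq_prod, ← Measure.prod_restrict, lintegral_prod _ hF.aemeasurable]

lemma continuous_trace {ψ : Pt → ℝ} (hψ : ContDiffOn ℝ (⊤:ℕ∞) ψ (closure HalfPlane)) :
    Continuous fun x : ℝ => ψ (x, 0) :=
  hψ.continuousOn.comp_continuous (continuous_id.prodMk continuous_const)
    (fun _ => mem_closure_halfPlane le_rfl)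

end MainHelpers
open scoped ENNReal

private lemma ennreal_inv_mul_four {a : ℝ≥0∞} (h0 : a ≠ 0) (ht : a ≠ ⊤) (x : ℝ≥0∞) :
    a⁻¹ * (4 * a * x) = 4 * x := by
  calc a⁻¹ * (4 * a * x) = (a⁻¹ * a) * (4 * x) := by ring
    _ = 4 * x := by rw [ENNReal.inv_mul_cancel h0 ht, one_mul]

/-- The trace operator maps `Ẇ^{1,2}(ℝ²₊)` boundedly into
`BMO(∂ℝ²₊)`: for every `φ` smooth up to the boundary with finite Dirichlet integral,
every `R > 0` and every ball centred on the boundary,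
`⨍_{B_R ∩ ∂ℝ²₊} |φ − ⨍_{B_{2R} ∩ ℝ²₊} φ| dσ ≤ C‖∇φ‖_{L²(ℝ²₊)}`. -/
theorem trace_maps_into_BMO :
    ∃ C : ℝ, 0 < C ∧
      ∀ ψ : Pt → ℝ, ContDiffOn ℝ (⊤ : ℕ∞) ψ (closure HalfPlane) →
        IntegrableOn (fun X => gradNorm ψ X ^ 2) HalfPlane volume →
        ∀ x₀ R : ℝ, 0 < R →
          (⨍ x in Set.Ioo (x₀ - R) (x₀ + R),
              |ψ (x, 0) - ⨍ Y in eball (x₀, (0:ℝ)) (2 * R) ∩ HalfPlane, ψ Y|) ≤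
            C * Real.sqrt (∫ X in HalfPlane, gradNorm ψ X ^ 2) := by
  refine ⟨12, by norm_num, ?_⟩
  intro ψ hψ hInt x₀ R hR
  set E : ℝ := ∫ X in HalfPlane, gradNorm ψ X ^ 2 with hEdef
  have hEnn : 0 ≤ E :=
    setIntegral_nonneg isOpen_halfPlane.measurableSet fun X _ => sq_nonneg _
  set J : Set ℝ := Set.Ioo (x₀ - 2*R) (x₀ + 2*R) with hJdef
  set T : Set ℝ := Set.Ioo (0:ℝ) (2*R) with hTdef
  set Q : Set Pt := J ×ˢ T with hQdef
  set D : Set Pt := eball (x₀, (0:ℝ)) (2 * R) ∩ HalfPlane with hDdef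
  set I : Set ℝ := Set.Ioo (x₀ - R) (x₀ + R) with hIdef
  set c : ℝ := ⨍ Y in D, ψ Y with hcdef
  -- measurability and geometry
  have hQm : MeasurableSet Q := measurableSet_Ioo.prod measurableSet_Ioo
  have hDm : MeasurableSet D := by
    have hcont : Continuous fun Y : Pt => edist2 (x₀, (0:ℝ)) Y := by
      unfold edist2
      exact Real.continuous_sqrt.comp (by fun_prop)
    exact ((isOpen_lt hcont continuous_const).inter isOpen_halfPlane).measurableSet
  have hQHP : Q ⊆ HalfPlane := fun X hX => hX.2.1
  have hDQ : D ⊆ Q := by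
    rintro Y ⟨hb, hhp⟩
    have h1 : |x₀ - Y.1| ≤ edist2 (x₀, (0:ℝ)) Y := by
      simpa using edist2_fst_le (x₀, (0:ℝ)) Y
    have h2 : |(0:ℝ) - Y.2| ≤ edist2 (x₀, (0:ℝ)) Y := by
      simpa using edist2_snd_le (x₀, (0:ℝ)) Y
    have hb' : edist2 (x₀, (0:ℝ)) Y < 2 * R := hb
    have h1' := abs_le.mp (h1.trans hb'.le)
    have h2' := abs_le.mp (h2.trans hb'.le)
    have h1'' : |x₀ - Y.1| < 2 * R := lt_of_le_of_lt h1 hb'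
    have h2'' : |(0:ℝ) - Y.2| < 2 * R := lt_of_le_of_lt h2 hb'
    rw [abs_lt] at h1'' h2''
    exact ⟨⟨by linarith [h1''.2], by linarith [h1''.1]⟩, ⟨hhp, by linarith [h2''.1]⟩⟩
  have hQ0D : I ×ˢ Set.Ioo (0:ℝ) R ⊆ D := by
    rintro Y ⟨hy1, hy2⟩
    constructor
    · show edist2 (x₀, (0:ℝ)) Y < 2 * R
      rw [edist2]
      rw [show ((x₀, (0:ℝ)) : Pt).1 = x₀ from rfl, show ((x₀, (0:ℝ)) : Pt).2 = 0 from rfl]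
      rw [Real.sqrt_lt' (by positivity)]
      simp only [hIdef, Set.mem_Ioo] at hy1 hy2
      nlinarith [hy1.1, hy1.2, hy2.1, hy2.2]
    · exact hy2.1
  -- volume computations
  have hvolJ : volume J = ENNReal.ofReal (4*R) := by
    rw [hJdef, Real.volume_Ioo]; congr 1; ring
  have hvolT : volume T = ENNReal.ofReal (2*R) := by
    rw [hTdef, Real.volume_Ioo]; congr 1; ring
  have hvolI : volume I = ENNReal.ofReal (2*R) := by
    rw [hIdef, Real.volume_Ioo]; congr 1; ring
  have hvolQ : volume Q = ENNReal.ofReal (8*R^2) := by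
    rw [hQdef, Measure.volume_eq_prod, Measure.prod_prod, hvolJ, hvolT,
      ← ENNReal.ofReal_mul (by positivity)]
    congr 1; ring
  have hvolD_le : volume D ≤ ENNReal.ofReal (8*R^2) := hvolQ ▸ measure_mono hDQ
  have hvolD_ne_top : volume D ≠ ∞ :=
    (lt_of_le_of_lt hvolD_le ENNReal.ofReal_lt_top).ne
  have hvolD_ge : ENNReal.ofReal (2*R^2) ≤ volume D := by
    refine le_trans (le_of_eq ?_) (measure_mono hQ0D)
    rw [Measure.volume_eq_prod, Measure.prod_prod, hvolI, Real.volume_Ioo,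
      ← ENNReal.ofReal_mul (by positivity)]
    congr 1; ring
  have hvolD_ne0 : volume D ≠ 0 := by
    intro h0
    have := lt_of_lt_of_le (ENNReal.ofReal_pos.mpr (by positivity : (0:ℝ) < 2*R^2)) hvolD_ge
    rw [h0] at this; exact (lt_irrefl _ this)
  -- ψ is integrable on D
  have hψD : IntegrableOn ψ D volume := by
    have hKsub : (Set.Icc (x₀-2*R) (x₀+2*R) ×ˢ Set.Icc (0:ℝ) (2*R)) ⊆ closure HalfPlane :=
      fun Y hY => mem_closure_halfPlane hY.2.1
    have hKcomp : IsCompact (Set.Icc (x₀-2*R) (x₀+2*R) ×ˢ Set.Icc (0:ℝ) (2*R)) :=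
      isCompact_Icc.prod isCompact_Icc
    obtain ⟨M, hM⟩ := hKcomp.exists_bound_of_continuousOn (hψ.continuousOn.mono hKsub)
    have hDK : D ⊆ Set.Icc (x₀-2*R) (x₀+2*R) ×ˢ Set.Icc (0:ℝ) (2*R) :=
      hDQ.trans (Set.prod_mono Set.Ioo_subset_Icc_self Set.Ioo_subset_Icc_self)
    have haesm : AEStronglyMeasurable ψ (volume.restrict D) :=
      (hψ.continuousOn.mono fun Y hY => subset_closure hY.2).aestronglyMeasurable hDm
    refine ⟨haesm, HasFiniteIntegral.restrict_of_bounded (C := M) hvolD_ne_top.lt_top ?_⟩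
    exact (ae_restrict_iff' hDm).mpr (Filter.Eventually.of_forall fun Y hY => hM Y (hDK hY))
  -- the vertical and horizontal potentials
  set P : ℝ → ℝ≥0∞ := fun x => ∫⁻ u in T, ENNReal.ofReal |grad ψ (x,u) 1| with hPdef
  set Hh : ℝ → ℝ≥0∞ := fun s => ∫⁻ u in J, ENNReal.ofReal |grad ψ (u,s) 0| with hHdef
  set EH : ℝ≥0∞ := ∫⁻ s in T, Hh s with hEHdef
  set EP : ℝ≥0∞ := ∫⁻ x in J, P x with hEPdef
  have hmeasF0 : Measurable fun X : Pt => ENNReal.ofReal |grad ψ X 0| :=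
    ENNReal.measurable_ofReal.comp (measurable_grad ψ 0).abs
  have hmeasF1 : Measurable fun X : Pt => ENNReal.ofReal |grad ψ X 1| :=
    ENNReal.measurable_ofReal.comp (measurable_grad ψ 1).abs
  have hmeasP : Measurable P := hmeasF1.lintegral_prod_right'
  have hmeasH : Measurable Hh := (hmeasF0.comp measurable_swap).lintegral_prod_right'
  -- energy bounds
  set Bd : ℝ≥0∞ := ENNReal.ofReal (3*R) * ENNReal.ofReal (Real.sqrt E) with hBddef
  have hEbound : ∀ i : Fin 2,
      (∫⁻ X in Q, ENNReal.ofReal |grad ψ X i|) ≤ Bd := by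
    intro i
    have hcs := cauchy_schwarz_lintegral (measurable_grad ψ i) hQm
    have hsq : (∫⁻ X in Q, ENNReal.ofReal (grad ψ X i ^ 2)) ≤ ENNReal.ofReal E := by
      have hle : ∀ X, ENNReal.ofReal (grad ψ X i ^ 2) ≤ ENNReal.ofReal (gradNorm ψ X ^ 2) :=
        fun X => ENNReal.ofReal_le_ofReal (by
          nlinarith [abs_grad_le ψ X i, abs_nonneg (grad ψ X i), gradNorm_nonneg ψ X,
            sq_abs (grad ψ X i)])
      calc ∫⁻ X in Q, ENNReal.ofReal (grad ψ X i ^ 2)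
          ≤ ∫⁻ X in Q, ENNReal.ofReal (gradNorm ψ X ^ 2) := lintegral_mono hle
        _ ≤ ∫⁻ X in HalfPlane, ENNReal.ofReal (gradNorm ψ X ^ 2) := lintegral_mono_set hQHP
        _ = ENNReal.ofReal E := by
            rw [hEdef, ofReal_integral_eq_lintegral_ofReal hInt
              ((ae_restrict_iff' isOpen_halfPlane.measurableSet).mpr
                (Filter.Eventually.of_forall fun X _ => sq_nonneg _))]
    refine hcs.trans ?_
    rw [hBddef]
    apply mul_le_mul'
    · rw [hvolQ, ENNReal.ofReal_rpow_of_nonneg (by positivity) (by norm_num)]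
      apply ENNReal.ofReal_le_ofReal
      rw [← Real.sqrt_eq_rpow]
      calc Real.sqrt (8*R^2) ≤ Real.sqrt (9*R^2) := Real.sqrt_le_sqrt (by nlinarith)
        _ = 3*R := by rw [show (9:ℝ)*R^2 = (3*R)^2 by ring, Real.sqrt_sq (by positivity)]
    · calc (∫⁻ X in Q, ENNReal.ofReal (grad ψ X i ^ 2)) ^ (1/2:ℝ)
          ≤ (ENNReal.ofReal E) ^ (1/2:ℝ) := ENNReal.rpow_le_rpow hsq (by norm_num)
        _ = ENNReal.ofReal (Real.sqrt E) := by
            rw [ENNReal.ofReal_rpow_of_nonneg hEnn (by norm_num), ← Real.sqrt_eq_rpow]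
  have hEP : EP ≤ Bd := by
    rw [hEPdef, hPdef, ← lintegral_prod_set hmeasF1]
    exact hEbound 1
  have hEH : EH ≤ Bd := by
    have hswap : EH = ∫⁻ x in J, ∫⁻ s in T, ENNReal.ofReal |grad ψ (x,s) 0| := by
      rw [hEHdef, hHdef]
      exact (lintegral_lintegral_swap hmeasF0.aemeasurable).symm
    rw [hswap, ← lintegral_prod_set hmeasF0]
    exact hEbound 0
  -- pointwise estimate
  have hR2ne0 : ENNReal.ofReal (2*R^2) ≠ 0 := (ENNReal.ofReal_pos.mpr (by positivity)).ne'
  have hpt : ∀ x ∈ I, ENNReal.ofReal |ψ (x, 0) - c| ≤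
      4 * P x + (ENNReal.ofReal (2*R^2))⁻¹ * (ENNReal.ofReal (4*R) * EH) := by
    intro x hxI
    have hxJ : x ∈ J := by
      rw [hIdef, Set.mem_Ioo] at hxI
      rw [hJdef, Set.mem_Ioo]
      exact ⟨by linarith [hxI.1], by linarith [hxI.2]⟩
    have hconst : IntegrableOn (fun _ : Pt => ψ (x,0)) D volume :=
      integrableOn_const hvolD_ne_top
    have hsub : IntegrableOn (fun Y => ψ (x,0) - ψ Y) D volume := hconst.sub hψD
    have havg : |ψ (x,0) - c| ≤ (volume D).toReal⁻¹ * ∫ Y in D, |ψ (x,0) - ψ Y| := by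
      have h1 : c = (volume D).toReal⁻¹ • ∫ Y in D, ψ Y := by rw [hcdef, setAverage_eq, measureReal_def]
      have h2 : ∫ Y in D, (ψ (x,0) - ψ Y) = (volume D).toReal * ψ (x,0) - ∫ Y in D, ψ Y := by
        rw [integral_sub hconst hψD, setIntegral_const, smul_eq_mul, measureReal_def]
      have hDtoReal_pos : 0 < (volume D).toReal :=
        ENNReal.toReal_pos hvolD_ne0 hvolD_ne_top
      have h3 : ψ (x,0) - c = (volume D).toReal⁻¹ * ∫ Y in D, (ψ (x,0) - ψ Y) := by
        rw [h1, h2, smul_eq_mul]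
        field_simp
      rw [h3, abs_mul, abs_of_nonneg (inv_nonneg.mpr ENNReal.toReal_nonneg)]
      refine mul_le_mul_of_nonneg_left ?_ (inv_nonneg.mpr ENNReal.toReal_nonneg)
      simpa [Real.norm_eq_abs] using
        norm_integral_le_integral_norm (μ := volume.restrict D) (fun Y => ψ (x,0) - ψ Y)
    have hof : ENNReal.ofReal |ψ (x,0) - c| ≤
        (volume D)⁻¹ * ∫⁻ Y in D, ENNReal.ofReal |ψ (x,0) - ψ Y| := by
      refine (ENNReal.ofReal_le_ofReal havg).trans ?_
      rw [ENNReal.ofReal_mul (inv_nonneg.mpr ENNReal.toReal_nonneg)]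
      apply mul_le_mul'
      · rw [← ENNReal.toReal_inv]
        exact le_of_eq (ENNReal.ofReal_toReal (by simp [hvolD_ne0]))
      · rw [ofReal_integral_eq_lintegral_ofReal hsub.abs
          (Filter.Eventually.of_forall fun Y => abs_nonneg _)]
    have hker : ∫⁻ Y in D, ENNReal.ofReal |ψ (x,0) - ψ Y| ≤ volume Q * P x + volume J * EH := by
      refine le_trans (lintegral_mono_set hDQ) ?_
      have hbd : ∀ᵐ Y ∂(volume.restrict Q),
          ENNReal.ofReal |ψ (x,0) - ψ Y| ≤ P x + Hh Y.2 := by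
        refine (ae_restrict_iff' hQm).mpr (Filter.Eventually.of_forall ?_)
        rintro Y ⟨hY1, hY2⟩
        have htri : |ψ (x,0) - ψ Y| ≤ |ψ (x,0) - ψ (x, Y.2)| + |ψ (x, Y.2) - ψ Y| :=
          abs_sub_le _ _ _
        refine le_trans (ENNReal.ofReal_le_ofReal htri) (ENNReal.ofReal_add_le.trans ?_)
        refine add_le_add ?_ ?_
        · exact vert_bound_bdry hψ hY2.1 hY2.2
        · exact horiz_bound hψ hY2.1 hxJ hY1
      refine le_trans (lintegral_mono_ae hbd) (le_of_eq ?_)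
      rw [lintegral_add_left measurable_const, setLIntegral_const]
      congr 1
      · exact mul_comm _ _
      · rw [hQdef, lintegral_prod_set (F := fun Y : Pt => Hh Y.2) (hmeasH.comp measurable_snd)]
        show ∫⁻ _ in J, ∫⁻ s in T, Hh s = volume J * EH
        rw [← hEHdef, setLIntegral_const, mul_comm]
    calc ENNReal.ofReal |ψ (x,0) - c|
        ≤ (volume D)⁻¹ * (volume Q * P x + volume J * EH) :=
          hof.trans (mul_le_mul' le_rfl hker)
      _ ≤ (ENNReal.ofReal (2*R^2))⁻¹ * (volume Q * P x + volume J * EH) :=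
          mul_le_mul' (ENNReal.inv_le_inv' hvolD_ge) le_rfl
      _ = 4 * P x + (ENNReal.ofReal (2*R^2))⁻¹ * (ENNReal.ofReal (4*R) * EH) := by
          rw [hvolQ, hvolJ, mul_add]
          congr 1
          have h8 : ENNReal.ofReal (8*R^2) = 4 * ENNReal.ofReal (2*R^2) := by
            rw [show (4:ℝ≥0∞) = ENNReal.ofReal (4:ℝ) by norm_num,
              ← ENNReal.ofReal_mul (by norm_num)]
            congr 1; ring
          rw [h8, ← mul_assoc,
            show (ENNReal.ofReal (2*R^2))⁻¹ * (4 * ENNReal.ofReal (2*R^2)) * P x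
              = (ENNReal.ofReal (2*R^2))⁻¹ * (4 * ENNReal.ofReal (2*R^2) * P x) by ring,
            ennreal_inv_mul_four hR2ne0 ENNReal.ofReal_ne_top]
  -- integrate over I
  have hImain : ∫⁻ x in I, ENNReal.ofReal |ψ (x, 0) - c| ≤
      ENNReal.ofReal (24 * R * Real.sqrt E) := by
    have hIm : MeasurableSet I := measurableSet_Ioo
    have hstep : ∫⁻ x in I, ENNReal.ofReal |ψ (x, 0) - c| ≤
        ∫⁻ x in I, (4 * P x + (ENNReal.ofReal (2*R^2))⁻¹ * (ENNReal.ofReal (4*R) * EH)) :=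
      lintegral_mono_ae ((ae_restrict_iff' hIm).mpr (Filter.Eventually.of_forall hpt))
    refine hstep.trans ?_
    rw [lintegral_add_left (hmeasP.const_mul 4), lintegral_const_mul 4 hmeasP,
      setLIntegral_const]
    have hPI : ∫⁻ x in I, P x ≤ Bd := by
      refine le_trans (lintegral_mono_set ?_) hEP
      rw [hIdef, hJdef]
      exact Set.Ioo_subset_Ioo (by linarith) (by linarith)
    have hsecond : (ENNReal.ofReal (2*R^2))⁻¹ * (ENNReal.ofReal (4*R) * EH) * volume I
        ≤ 4 * Bd := by
      rw [hvolI]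
      have h8 : ENNReal.ofReal (4*R) * ENNReal.ofReal (2*R)
          = 4 * ENNReal.ofReal (2*R^2) := by
        rw [← ENNReal.ofReal_mul (by positivity),
          show (4:ℝ≥0∞) = ENNReal.ofReal (4:ℝ) by norm_num,
          ← ENNReal.ofReal_mul (by norm_num)]
        congr 1; ring
      calc (ENNReal.ofReal (2*R^2))⁻¹ * (ENNReal.ofReal (4*R) * EH) * ENNReal.ofReal (2*R)
          = (ENNReal.ofReal (2*R^2))⁻¹ * (4 * ENNReal.ofReal (2*R^2) * EH) := by
            rw [← h8]; ring
        _ = 4 * EH := ennreal_inv_mul_four hR2ne0 ENNReal.ofReal_ne_top EH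
        _ ≤ 4 * Bd := mul_le_mul' le_rfl hEH
    have h8Bd : ENNReal.ofReal (24 * R * Real.sqrt E) = 8 * Bd := by
      rw [hBddef, ← ENNReal.ofReal_mul (show (0:ℝ) ≤ 3*R by linarith),
        show (8:ℝ≥0∞) = ENNReal.ofReal (8:ℝ) by norm_num,
        ← ENNReal.ofReal_mul (by norm_num : (0:ℝ) ≤ 8)]
      congr 1; ring
    refine le_trans (add_le_add (mul_le_mul' (le_refl (4:ℝ≥0∞)) hPI) hsecond) (le_of_eq ?_)
    rw [h8Bd]
    ring
  -- conclusion
  have hIm : MeasurableSet I := measurableSet_Ioo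
  have htr : Continuous fun x : ℝ => ψ (x, 0) := continuous_trace hψ
  have hcont2 : Continuous fun x : ℝ => |ψ (x, 0) - c| := (htr.sub continuous_const).abs
  have hint2 : IntegrableOn (fun x => |ψ (x, 0) - c|) I volume :=
    (hcont2.integrableOn_Icc (a := x₀ - R) (b := x₀ + R)).mono_set Set.Ioo_subset_Icc_self
  have heq1 : ∫ x in I, |ψ (x, 0) - c| = (∫⁻ x in I, ENNReal.ofReal |ψ (x, 0) - c|).toReal := by
    rw [← ofReal_integral_eq_lintegral_ofReal hint2
      (Filter.Eventually.of_forall fun x => abs_nonneg _),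
      ENNReal.toReal_ofReal (setIntegral_nonneg hIm fun x _ => abs_nonneg _)]
  have hle2 : ∫ x in I, |ψ (x, 0) - c| ≤ 24 * R * Real.sqrt E := by
    rw [heq1]
    refine le_trans (ENNReal.toReal_mono ENNReal.ofReal_ne_top hImain) ?_
    rw [ENNReal.toReal_ofReal (by positivity)]
  rw [setAverage_eq, smul_eq_mul, measureReal_def]
  have hvolIR : (volume I).toReal = 2*R := by
    rw [hvolI, ENNReal.toReal_ofReal (by positivity)]
  rw [hvolIR]
  calc (2*R)⁻¹ * ∫ x in I, |ψ (x, 0) - c|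
      ≤ (2*R)⁻¹ * (24 * R * Real.sqrt E) :=
        mul_le_mul_of_nonneg_left hle2 (by positivity)
    _ = 12 * Real.sqrt E := by field_simp; ring
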